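/- arXiv:1712.01899 — 3 statements merged into one kernel-verified Lean document; each statement's English description precedes it below -/
import Mathlib

section
/- Let λ ≠ 0 and δ > 0. Set β_λ = (1/2)(2+λ²+|λ|√(λ²+4)), α_λ = (1/2)(2+λ²−|λ|√(λ²+4)), q_λ = |λ|√(λ²+4), and r_λ = q_λ + λ² + |λ|δ/√(λ²+4). If a ≥ 0 satisfies β_λ ≤ a² ≤ β_λ + δ, then a²(a² − 1 + |λ|a) ≤ a²(a² − β_λ + r_λ). -/
/-!
Writing `s = √(l² + 4)`, one has `β = ((|l| + s) / 2)²` and `r - β + 1 = |l| ((|l| + s) / 2 + δ / s)`.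
Since `a² ≤ β + δ`, concavity of the square root at `β` gives `a ≤ √β + δ / (2√β) ≤ √β + δ / s`,
hence `|l| a - 1 ≤ r - β`, and multiplying by `a² ≥ 0` gives the claim.
-/

open Real

theorem le_add_div_two_mul_of_sq_le_sq_add {a x y : ℝ} (hx : 0 < x) (hy : 0 ≤ y)
    (h : a ^ 2 ≤ x ^ 2 + y) : a ≤ x + y / (2 * x) := by
  have hsq : (x + y / (2 * x)) ^ 2 = x ^ 2 + y + (y / (2 * x)) ^ 2 := by
    field_simp
    ring
  have hpos : 0 ≤ x + y / (2 * x) := by positivity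
  calc a ≤ |a| := le_abs_self a
    _ ≤ x + y / (2 * x) := abs_le_of_sq_le_sq (by nlinarith [sq_nonneg (y / (2 * x))]) hpos

section

variable (l : ℝ)

theorem two_le_sqrt_sq_add_four : 2 ≤ √(l ^ 2 + 4) :=
  le_sqrt_of_sq_le (by nlinarith [sq_nonneg l])

theorem sq_half_abs_add_sqrt_sq_add_four :
    ((|l| + √(l ^ 2 + 4)) / 2) ^ 2 = (1/2) * (2 + l ^ 2 + |l| * √(l ^ 2 + 4)) := by
  have hs : √(l ^ 2 + 4) ^ 2 = l ^ 2 + 4 := sq_sqrt (by positivity)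
  linear_combination (1/4) * hs + (1/4) * sq_abs l

theorem le_half_abs_add_sqrt_add_div {δ a : ℝ} (hδ : 0 ≤ δ)
    (h : a ^ 2 ≤ (1/2) * (2 + l ^ 2 + |l| * √(l ^ 2 + 4)) + δ) :
    a ≤ (|l| + √(l ^ 2 + 4)) / 2 + δ / √(l ^ 2 + 4) := by
  have hs := two_le_sqrt_sq_add_four l
  rw [← sq_half_abs_add_sqrt_sq_add_four] at h
  calc a ≤ (|l| + √(l ^ 2 + 4)) / 2 + δ / (2 * ((|l| + √(l ^ 2 + 4)) / 2)) :=
        le_add_div_two_mul_of_sq_le_sq_add (by positivity) hδ h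
    _ ≤ (|l| + √(l ^ 2 + 4)) / 2 + δ / √(l ^ 2 + 4) := by
        gcongr
        linarith [abs_nonneg l]

end

theorem F_upper_bound_general (l δ a : ℝ)
    (β r : ℝ)
    (hβ : β = (1/2) * (2 + l^2 + |l| * Real.sqrt (l^2 + 4)))
    (hr : r = |l| * Real.sqrt (l^2 + 4) + l^2 + |l| * δ / Real.sqrt (l^2 + 4))
    (h1 : β ≤ a ^ 2) (h2 : a ^ 2 ≤ β + δ) :
    a ^ 2 * (a ^ 2 - 1 + |l| * a) ≤ a ^ 2 * (a ^ 2 - β + r) := by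
  have ha : a ≤ (|l| + √(l ^ 2 + 4)) / 2 + δ / √(l ^ 2 + 4) :=
    le_half_abs_add_sqrt_add_div l (by linarith) (hβ ▸ h2)
  have hs : √(l ^ 2 + 4) ≠ 0 := by linarith [two_le_sqrt_sq_add_four l]
  have hrβ : r - β + 1 = |l| * ((|l| + √(l ^ 2 + 4)) / 2 + δ / √(l ^ 2 + 4)) := by
    rw [hr, hβ]
    field_simp
    linear_combination (-1) * √(l ^ 2 + 4) * sq_abs l
  refine mul_le_mul_of_nonneg_left ?_ (sq_nonneg a)
  linarith [mul_le_mul_of_nonneg_left ha (abs_nonneg l)]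

theorem F_upper_bound (l δ a : ℝ) (hl : l ≠ 0) (hδ : 0 < δ) (ha : 0 ≤ a)
    (β r : ℝ)
    (hβ : β = (1/2) * (2 + l^2 + |l| * Real.sqrt (l^2 + 4)))
    (hr : r = |l| * Real.sqrt (l^2 + 4) + l^2 + |l| * δ / Real.sqrt (l^2 + 4))
    (h1 : β ≤ a ^ 2) (h2 : a ^ 2 ≤ β + δ) :
    a ^ 2 * (a ^ 2 - 1 + |l| * a) ≤ a ^ 2 * (a ^ 2 - β + r) :=
  F_upper_bound_general l δ a β r hβ hr h1 h2
end

section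
/- For λ ≠ 0 and positive integer k, let r = (√(λ²+4k) − λ)/2 (the positive root of λ = k/r − r) and μ = (√(λ²+4k) + λ)/(2k). Then the quantity S_k = k·μ² equals (1/(2k))(λ² + 2k + λ√(λ²+4k)) when λ > 0. Moreover S_1 = β_λ := (1/2)(2+λ²+λ√(λ²+4)), and S_k < β_λ for all k ≥ 2. -/
theorem cylinder_Sk (l : ℝ) (hl : 0 < l) (k : ℕ) (hk : 1 ≤ k)
    (r μ Sk β : ℝ)
    (hr : r = (Real.sqrt (l^2 + 4*k) - l) / 2)
    (hμ : μ = (Real.sqrt (l^2 + 4*k) + l) / (2*k))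
    (hSk : Sk = k * μ ^ 2)
    (hβ : β = (1/2) * (2 + l^2 + l * Real.sqrt (l^2 + 4))) :
    Sk = (1/(2*k)) * (l^2 + 2*k + l * Real.sqrt (l^2 + 4*k)) ∧
    (k = 1 → Sk = β) ∧
    (2 ≤ k → Sk < β) := by
  have hkpos : (0:ℝ) < (k:ℝ) := by exact_mod_cast Nat.lt_of_lt_of_le Nat.zero_lt_one hk
  set s := Real.sqrt (l^2 + 4*k) with hs_def
  set t := Real.sqrt (l^2 + 4) with ht_def
  have hs0 : 0 ≤ s := Real.sqrt_nonneg _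
  have ht0 : 0 ≤ t := Real.sqrt_nonneg _
  have hs2 : s^2 = l^2 + 4*k := Real.sq_sqrt (by positivity)
  have ht2 : t^2 = l^2 + 4 := Real.sq_sqrt (by positivity)
  have h1 : Sk = (1/(2*k)) * (l^2 + 2*k + l * s) := by
    rw [hSk, hμ]
    field_simp
    nlinarith [hs2]
  refine ⟨h1, ?_, ?_⟩
  · intro hk1
    subst hk1
    rw [h1, hβ]
    norm_num
    have : s = t := by norm_num [hs_def, ht_def]
    rw [this]; ring
  · intro hk2
    have hk2' : (2:ℝ) ≤ (k:ℝ) := by exact_mod_cast hk2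
    have hst : s < (k:ℝ) * t := by
      have hkk : (4:ℝ) ≤ (k:ℝ)*(k:ℝ) := by
        nlinarith [mul_le_mul hk2' hk2' (by norm_num : (0:ℝ) ≤ 2) (by linarith : (0:ℝ) ≤ (k:ℝ))]
      have hsq : s^2 < ((k:ℝ)*t)^2 := by
        have : ((k:ℝ)*t)^2 = (k:ℝ)^2*(l^2+4) := by rw [mul_pow, ht2]
        rw [this, hs2]
        nlinarith [mul_pos hl hl, hk2']
      exact lt_of_pow_lt_pow_left₀ 2 (by positivity) hsq
    rw [h1, hβ]
    rw [div_mul_eq_mul_div, div_lt_iff₀ (by positivity)]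
    nlinarith [mul_lt_mul_of_pos_left hst hl]
end

section
/- Let λ < 0 and k ≥ 1 an integer. With r = (√(λ²+4k) − λ)/2 satisfying λ = k/r − r and r > 0, the squared second fundamental form value S_k = k/r² = (1/(2k))(λ² + 2k − |λ|√(λ²+4k)) satisfies S_k < β_λ := (1/2)(2 + λ² + |λ|√(λ²+4)). -/
theorem cylinder_Sk_neg_lambda (l : ℝ) (hl : l < 0) (k : ℕ) (hk : 1 ≤ k)
    (r Sk β : ℝ)
    (hr : r = (Real.sqrt (l^2 + 4*k) - l) / 2)
    (hSk : Sk = k / r ^ 2)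
    (hβ : β = (1/2) * (2 + l^2 + |l| * Real.sqrt (l^2 + 4))) :
    0 < r ∧ l = k / r - r ∧
    Sk = (1/(2*k)) * (l^2 + 2*k - |l| * Real.sqrt (l^2 + 4*k)) ∧
    Sk < β := by
  have hk' : (1:ℝ) ≤ (k:ℝ) := by exact_mod_cast hk
  have hkpos : (0:ℝ) < (k:ℝ) := by linarith
  obtain ⟨s, hsdef⟩ : ∃ s, Real.sqrt (l^2 + 4*(k:ℝ)) = s := ⟨_, rfl⟩
  rw [hsdef] at hr
  rw [hsdef]
  have hnn : (0:ℝ) ≤ l^2 + 4*(k:ℝ) := by positivity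
  have hs2 : s^2 = l^2 + 4*(k:ℝ) := by rw [← hsdef]; exact Real.sq_sqrt hnn
  have hsnn : 0 ≤ s := by rw [← hsdef]; exact Real.sqrt_nonneg _
  have hsl : -l < s := by nlinarith
  have hr0 : 0 < r := by rw [hr]; linarith
  have hl2 : |l| = -l := abs_of_neg hl
  have hr2 : r^2 = (l^2 + 2*(k:ℝ) - l*s)/2 := by
    rw [hr]; linear_combination (1/4) * hs2
  have hfirst : l = k/r - r := by
    have hrk : r * (l + r) = (k:ℝ) := by rw [hr]; linear_combination (1/4) * hs2
    rw [← hrk, mul_comm, mul_div_assoc, div_self hr0.ne', mul_one]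
    ring
  have hSk' : Sk = (1/(2*(k:ℝ))) * (l^2 + 2*(k:ℝ) - |l| * s) := by
    have key : r^2 * (l^2 + 2*(k:ℝ) + l*s) = 2*(k:ℝ)*(k:ℝ) := by
      rw [hr2]; linear_combination (-(l^2)/2) * hs2
    rw [hSk, hl2]
    have hrne : r^2 ≠ 0 := by positivity
    field_simp
    linarith [key]
  have hSk1 : Sk < 1 := by
    rw [hSk']
    have hlt : l^2 + 2*(k:ℝ) - |l| * s < 2*(k:ℝ) := by
      rw [hl2]; nlinarith
    rw [div_mul_eq_mul_div, one_mul, div_lt_one (by positivity)]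
    linarith
  have hβ1 : 1 < β := by
    have h4 : 0 ≤ Real.sqrt (l^2+4) := Real.sqrt_nonneg _
    have h5 : 0 ≤ |l| * Real.sqrt (l^2+4) := by positivity
    rw [hβ]; nlinarith
  exact ⟨hr0, hfirst, hSk', by linarith⟩
end
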